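/- Let J be a symmetric real n×n matrix with zero diagonal and J_{ij} ≥ 0 for all i,j, and let h ∈ R^n with h_i ≥ 0 for all i. In the Ising model μ(J,h), for any indices 1 ≤ i,j,k ≤ n: (a) Cov(X_i, X_j) ≥ 0, and (b) E[X_i X_j X_k] − E[X_i X_k]E[X_j] − E[X_i]E[X_j X_k] − E[X_i X_j]E[X_k] + 2·E[X_i]E[X_j]E[X_k] ≤ 0, where expectations are with respect to μ(J,h). (These are respectively the second and third partial derivatives of log Z(h) in the coordinates h_j and h_j,h_k, establishing the smooth monotone submodularity of the magnetization h ↦ E_{μ(J,h)}[X_i] on the nonnegative orthant.) -/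

import Mathlib

open Finset
open scoped BigOperators Classical

noncomputable section

/-- The value of a spin: `true ↦ 1`, `false ↦ -1`. -/
def spin (b : Bool) : ℝ := if b then 1 else -1

/-- Boltzmann weight of a configuration of the Ising model `μ(J,h)`. -/
def isingWeight (n : ℕ) (J : Fin n → Fin n → ℝ) (h : Fin n → ℝ) (x : Fin n → Bool) : ℝ :=
  Real.exp ((1 / 2) * (∑ a, ∑ b, J a b * spin (x a) * spin (x b)) + ∑ a, h a * spin (x a))

/-- Expectation of `f` with respect to the Ising model `μ(J,h)`. -/
def isingE (n : ℕ) (J : Fin n → Fin n → ℝ) (h : Fin n → ℝ) (f : (Fin n → Bool) → ℝ) : ℝ :=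
  (∑ x : Fin n → Bool, f x * isingWeight n J h x) / (∑ x : Fin n → Bool, isingWeight n J h x)

/-!
Both inequalities are instances of Griffiths–Kelly–Sherman positivity after a change of
variables. Take two independent copies `x, y` of the system and the rotated spins
`q = (x + y) / 2`, `t = (x - y) / 2`. The product weight becomes the exponential of a
nonnegative combination of products of `q`'s and `t`'s, and every single-site moment of `(q, t)`
is nonnegative; expanding the exponential shows that the two-replica mean of every monomial in
`q, t` is nonnegative. The covariance of `x_i, x_j` is such a mean, `2 ⟨(q_i + t_i) t_j⟩`.

For the third cumulant (the GHS inequality) duplicate once more: with four replicas and the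
rotation `α, β, γ, δ` of Ellis, Monroe and Newman, the cumulant equals
`-⟨(β_i + δ_i) (β_j + δ_j) (-γ_k)⟩`, and all moments of `(α, β, -γ, δ)` are again nonnegative.
-/

section ConeDuality

variable {X : Type*} {M : Submonoid (X → ℝ)}

lemma mul_mem_hull {f g : X → ℝ} (hf : f ∈ PointedCone.hull ℝ (M : Set (X → ℝ)))
    (hg : g ∈ PointedCone.hull ℝ (M : Set (X → ℝ))) :
    f * g ∈ PointedCone.hull ℝ (M : Set (X → ℝ)) := by
  induction hf using Submodule.span_induction with
  | mem f hf =>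
    induction hg using Submodule.span_induction with
    | mem g hg => exact PointedCone.subset_hull (M.mul_mem hf hg)
    | zero => simp
    | add g₁ g₂ _ _ ih₁ ih₂ => simpa only [mul_add] using add_mem ih₁ ih₂
    | smul c g _ ih => simpa only [mul_smul_comm] using Submodule.smul_mem _ c ih
  | zero => simp
  | add f₁ f₂ _ _ ih₁ ih₂ => simpa only [add_mul] using add_mem ih₁ ih₂
  | smul c f _ ih => simpa only [smul_mul_assoc] using Submodule.smul_mem _ c ih

variable [Fintype X]

lemma sum_mul_nonneg_of_mem_hull {F : X → ℝ} (hF : ∀ g ∈ M, 0 ≤ ∑ x, g x * F x) {g : X → ℝ}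
    (hg : g ∈ PointedCone.hull ℝ (M : Set (X → ℝ))) : 0 ≤ ∑ x, g x * F x := by
  induction hg using Submodule.span_induction with
  | mem g hg => exact hF g hg
  | zero => simp
  | add g₁ g₂ _ _ ih₁ ih₂ =>
    simpa only [Pi.add_apply, add_mul, sum_add_distrib] using add_nonneg ih₁ ih₂
  | smul c g _ ih =>
    simpa only [← Nonneg.coe_smul, Pi.smul_apply, smul_eq_mul, mul_assoc, ← mul_sum] using
      mul_nonneg c.2 ih

theorem sum_mul_exp_nonneg (hM : ∀ f ∈ M, 0 ≤ ∑ x, f x) {g H : X → ℝ}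
    (hg : g ∈ PointedCone.hull ℝ (M : Set (X → ℝ)))
    (hH : H ∈ PointedCone.hull ℝ (M : Set (X → ℝ))) :
    0 ≤ ∑ x, g x * Real.exp (H x) := by
  have hpow : ∀ k : ℕ, ∀ g ∈ M, 0 ≤ ∑ x, g x * H x ^ k := by
    intro k
    induction k with
    | zero => simpa using hM
    | succ k ih =>
      intro g hg
      have hgH : ∀ m ∈ M, 0 ≤ ∑ x, m x * (g x * H x ^ k) := fun m hm => by
        simpa only [Pi.mul_apply, mul_assoc] using ih (m * g) (M.mul_mem hm hg)
      have := sum_mul_nonneg_of_mem_hull (F := g * H ^ k) hgH hH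
      simpa only [Pi.mul_apply, Pi.pow_apply, pow_succ, mul_left_comm, mul_comm] using this
  refine sum_mul_nonneg_of_mem_hull (fun g hg => ?_) hg
  have hexp : HasSum (fun k : ℕ => (∑ x, g x * H x ^ k) / k.factorial)
      (∑ x, g x * Real.exp (H x)) := by
    simp only [sum_div, mul_div_assoc, Real.exp_eq_exp_ℝ]
    exact hasSum_sum fun x _ => (NormedSpace.expSeries_div_hasSum_exp (H x)).mul_left (g x)
  exact hexp.nonneg fun k => div_nonneg (hpow k g hg) (by positivity)

end ConeDuality

section SiteMonomials

variable {ι S κ : Type*}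

def siteMonomials (V : κ → S → ℝ) : Submonoid ((ι → S) → ℝ) :=
  Submonoid.closure (Set.range fun p : ι × κ => fun x => V p.2 (x p.1))

abbrev siteMonomialCone (V : κ → S → ℝ) : PointedCone ℝ ((ι → S) → ℝ) :=
  PointedCone.hull ℝ (siteMonomials (ι := ι) V : Set ((ι → S) → ℝ))

lemma siteObservable_mem_siteMonomialCone (V : κ → S → ℝ) (a : ι) (v : κ) :
    (fun x : ι → S => V v (x a)) ∈ siteMonomialCone V :=
  PointedCone.subset_hull (Submonoid.subset_closure ⟨(a, v), rfl⟩)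

variable [Fintype ι]

def productFunctions (M : Submonoid (S → ℝ)) : Submonoid ((ι → S) → ℝ) where
  carrier := {f | ∃ φ : ι → S → ℝ, (∀ a, φ a ∈ M) ∧ f = fun x => ∏ a, φ a (x a)}
  one_mem' := ⟨1, fun _ => M.one_mem, by ext; simp⟩
  mul_mem' := by
    rintro _ _ ⟨φ, hφ, rfl⟩ ⟨ψ, hψ, rfl⟩
    exact ⟨φ * ψ, fun a => M.mul_mem (hφ a) (hψ a), by ext; simp [prod_mul_distrib]⟩

lemma siteMonomials_le_productFunctions (V : κ → S → ℝ) :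
    siteMonomials (ι := ι) V ≤ productFunctions (Submonoid.closure (Set.range V)) := by
  refine Submonoid.closure_le.2 ?_
  rintro _ ⟨⟨a, v⟩, rfl⟩
  refine ⟨fun b s => if b = a then V v s else 1, fun b => ?_, by ext; simp⟩
  by_cases hb : b = a
  · simpa [hb] using Submonoid.subset_closure (Set.mem_range_self v)
  · simp only [hb, if_false]
    exact one_mem _

theorem sum_nonneg_of_mem_siteMonomials [DecidableEq ι] [Fintype S] [Fintype κ] {V : κ → S → ℝ}
    (hV : ∀ e : κ → ℕ, 0 ≤ ∑ s, ∏ v, V v s ^ e v) {f : (ι → S) → ℝ}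
    (hf : f ∈ siteMonomials V) : 0 ≤ ∑ x, f x := by
  obtain ⟨φ, hφ, rfl⟩ := siteMonomials_le_productFunctions V hf
  rw [← Fintype.prod_sum]
  refine prod_nonneg fun a _ => ?_
  obtain ⟨e, he⟩ := Submonoid.mem_closure_range_iff_of_fintype.1 (hφ a)
  simpa [he] using hV e

end SiteMonomials

section WeightedMean

variable {X : Type*} [Fintype X]

def weightedMean (W : X → ℝ) : (X → ℝ) →ₗ[ℝ] ℝ where
  toFun f := (∑ x, f x * W x) / ∑ x, W x
  map_add' f g := by simp only [Pi.add_apply, add_mul, sum_add_distrib, add_div]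
  map_smul' c f := by
    simp only [Pi.smul_apply, smul_eq_mul, mul_assoc, ← mul_sum, mul_div_assoc, RingHom.id_apply]

lemma weightedMean_apply (W f : X → ℝ) :
    weightedMean W f = (∑ x, f x * W x) / ∑ x, W x := rfl

lemma weightedMean_one {W : X → ℝ} (hW : ∑ x, W x ≠ 0) : weightedMean W 1 = 1 := by
  simp [weightedMean_apply, hW]

lemma weightedMean_nonneg {W f : X → ℝ} (hW : ∀ x, 0 ≤ W x) (hf : 0 ≤ ∑ x, f x * W x) :
    0 ≤ weightedMean W f :=
  div_nonneg hf (sum_nonneg fun x _ => hW x)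

end WeightedMean

section ReplicaProd

variable {ι S : Type*}

def replicaProd (f g : (ι → S) → ℝ) : (ι → S × S) → ℝ :=
  fun η => f (fun a => (η a).1) * g (fun a => (η a).2)

def replicaDiff (f : (ι → S) → ℝ) : (ι → S × S) → ℝ := replicaProd f 1 - replicaProd 1 f

def replicaSum (f : (ι → S) → ℝ) : (ι → S × S) → ℝ := replicaProd f 1 + replicaProd 1 f

def replicaCov (f g : (ι → S) → ℝ) : (ι → S × S) → ℝ := replicaProd (f * g) 1 - replicaProd f g

lemma replicaProd_mul_replicaProd (f g f' g' : (ι → S) → ℝ) :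
    replicaProd f g * replicaProd f' g' = replicaProd (f * f') (g * g') := by
  ext η
  simp only [replicaProd, Pi.mul_apply]
  ring

variable [Fintype ι] [DecidableEq ι] [Fintype S]

lemma sum_replicaProd (f g : (ι → S) → ℝ) :
    ∑ η, replicaProd f g η = (∑ x, f x) * ∑ y, g y := by
  rw [Fintype.sum_mul_sum, ← Fintype.sum_prod_type',
    ← (Equiv.arrowProdEquivProdArrow ι (fun _ => S) (fun _ => S)).sum_comp]
  rfl

lemma weightedMean_replicaProd (W f g : (ι → S) → ℝ) :
    weightedMean (replicaProd W W) (replicaProd f g) = weightedMean W f * weightedMean W g := by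
  simp only [weightedMean_apply, ← Pi.mul_apply (replicaProd f g), replicaProd_mul_replicaProd,
    sum_replicaProd, mul_div_mul_comm]
  rfl

variable {W : (ι → S) → ℝ}

lemma sum_replicaProd_self_ne_zero (hW : ∑ x, W x ≠ 0) : ∑ η, replicaProd W W η ≠ 0 := by
  rw [sum_replicaProd]
  exact mul_ne_zero hW hW

theorem weightedMean_mul_sub_mul (hW : ∑ x, W x ≠ 0) (f g : (ι → S) → ℝ) :
    weightedMean W (f * g) - weightedMean W f * weightedMean W g =
      weightedMean (replicaProd W W) (replicaCov f g) := by
  rw [replicaCov, map_sub, weightedMean_replicaProd, weightedMean_replicaProd, weightedMean_one hW,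
    mul_one]

theorem weightedMean_thirdCumulant_eq (hW : ∑ x, W x ≠ 0) (f g k : (ι → S) → ℝ) :
    weightedMean W (f * g * k) - weightedMean W (f * k) * weightedMean W g
        - weightedMean W f * weightedMean W (g * k) - weightedMean W (f * g) * weightedMean W k
        + 2 * weightedMean W f * weightedMean W g * weightedMean W k
      = (weightedMean (replicaProd W W) (replicaDiff f * replicaDiff g * replicaSum k)
          - weightedMean (replicaProd W W) (replicaDiff f * replicaDiff g)
            * weightedMean (replicaProd W W) (replicaSum k)) / 2 := by
  simp only [replicaDiff, replicaSum, mul_sub, sub_mul, mul_add, replicaProd_mul_replicaProd,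
    map_add, map_sub, weightedMean_replicaProd, mul_one, one_mul, weightedMean_one hW]
  ring

end ReplicaProd

lemma Odd.zero_pow {M₀ : Type*} [MonoidWithZero M₀] {m : ℕ} (hm : Odd m) : (0 : M₀) ^ m = 0 :=
  _root_.zero_pow hm.pos.ne'

def rotatedPairSpins : Fin 2 → Bool × Bool → ℝ :=
  ![fun s => (spin s.1 + spin s.2) / 2, fun s => (spin s.1 - spin s.2) / 2]

def pairReplica : Fin 2 → Bool × Bool → Bool := ![Prod.fst, Prod.snd]

lemma sum_spin_pairReplica_mul (s s' : Bool × Bool) :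
    ∑ r, spin (pairReplica r s) * spin (pairReplica r s')
      = 2 * ∑ v, rotatedPairSpins v s * rotatedPairSpins v s' := by
  simp only [Fin.sum_univ_two, pairReplica, rotatedPairSpins, Matrix.cons_val_zero,
    Matrix.cons_val_one]
  ring

lemma sum_spin_pairReplica (s : Bool × Bool) :
    ∑ r, spin (pairReplica r s) = 2 * rotatedPairSpins 0 s := by
  simp only [Fin.sum_univ_two, pairReplica, rotatedPairSpins, Matrix.cons_val_zero,
    Matrix.cons_val_one]
  ring

lemma rotatedPairSpins_moment_nonneg (e : Fin 2 → ℕ) :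
    0 ≤ ∑ s, ∏ v, rotatedPairSpins v s ^ e v := by
  simp only [Fintype.sum_prod_type, Fintype.sum_bool, Fin.prod_univ_two, rotatedPairSpins, spin]
  norm_num
  rcases Nat.even_or_odd (e 0) with h0 | h0 <;> rcases Nat.even_or_odd (e 1) with h1 | h1
  all_goals simp [Odd.neg_one_pow, Odd.zero_pow, *]
  all_goals positivity

/-- The third component is `-γ` rather than the `γ` of Ellis–Monroe–Newman: with this sign all
single-site moments are nonnegative. -/
def rotatedQuadrupleSpins : Fin 4 → (Bool × Bool) × (Bool × Bool) → ℝ :=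
  ![fun s => (spin s.1.1 + spin s.1.2 + spin s.2.1 + spin s.2.2) / 2,
    fun s => (spin s.1.1 - spin s.1.2 + spin s.2.1 - spin s.2.2) / 2,
    fun s => (spin s.2.1 + spin s.2.2 - spin s.1.1 - spin s.1.2) / 2,
    fun s => (spin s.1.1 - spin s.1.2 - spin s.2.1 + spin s.2.2) / 2]

def quadrupleReplica : Fin 4 → (Bool × Bool) × (Bool × Bool) → Bool :=
  ![fun s => s.1.1, fun s => s.1.2, fun s => s.2.1, fun s => s.2.2]

lemma sum_spin_quadrupleReplica_mul (s s' : (Bool × Bool) × (Bool × Bool)) :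
    ∑ r, spin (quadrupleReplica r s) * spin (quadrupleReplica r s')
      = ∑ v, rotatedQuadrupleSpins v s * rotatedQuadrupleSpins v s' := by
  simp only [Fin.sum_univ_four, quadrupleReplica, rotatedQuadrupleSpins, Matrix.cons_val_zero,
    Matrix.cons_val_one, Matrix.cons_val_two, Matrix.cons_val_three, Matrix.head_cons,
    Matrix.tail_cons]
  ring

lemma sum_spin_quadrupleReplica (s : (Bool × Bool) × (Bool × Bool)) :
    ∑ r, spin (quadrupleReplica r s) = 2 * rotatedQuadrupleSpins 0 s := by
  simp only [Fin.sum_univ_four, quadrupleReplica, rotatedQuadrupleSpins, Matrix.cons_val_zero,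
    Matrix.cons_val_one, Matrix.cons_val_two, Matrix.cons_val_three, Matrix.head_cons,
    Matrix.tail_cons]
  ring

lemma rotatedQuadrupleSpins_moment_nonneg (e : Fin 4 → ℕ) :
    0 ≤ ∑ s, ∏ v, rotatedQuadrupleSpins v s ^ e v := by
  simp only [Fintype.sum_prod_type, Fintype.sum_bool, Fin.prod_univ_four, rotatedQuadrupleSpins,
    spin, Matrix.cons_val_zero, Matrix.cons_val_one, Matrix.cons_val_two, Matrix.cons_val_three,
    Matrix.head_cons, Matrix.tail_cons]
  norm_num
  rcases Nat.even_or_odd (e 0) with h0 | h0 <;> rcases Nat.even_or_odd (e 1) with h1 | h1 <;>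
    rcases Nat.even_or_odd (e 2) with h2 | h2 <;> rcases Nat.even_or_odd (e 3) with h3 | h3 <;>
    simp [Even.neg_pow, Odd.neg_pow, Odd.zero_pow, *] <;> ring_nf <;> positivity

section IsingReplicas

variable {n : ℕ} {J : Fin n → Fin n → ℝ} {h : Fin n → ℝ}

lemma prod_isingWeight_eq_exp {S κ R : Type*} [Fintype κ] [Fintype R] (π : R → S → Bool)
    (V : κ → S → ℝ) (c d : ℝ) (v₀ : κ)
    (hquad : ∀ s s', ∑ r, spin (π r s) * spin (π r s') = c * ∑ v, V v s * V v s')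
    (hlin : ∀ s, ∑ r, spin (π r s) = d * V v₀ s) (η : Fin n → S) :
    ∏ r, isingWeight n J h (fun a => π r (η a)) =
      Real.exp (∑ a, ∑ b, c / 2 * J a b * ∑ v, V v (η a) * V v (η b)
        + ∑ a, d * h a * V v₀ (η a)) := by
  simp only [isingWeight, ← Real.exp_sum, sum_add_distrib]
  congr 1
  have hrhs : ∑ a, ∑ b, c / 2 * J a b * ∑ v, V v (η a) * V v (η b) + ∑ a, d * h a * V v₀ (η a)
      = ∑ a, ∑ b, 1 / 2 * J a b * ∑ r, spin (π r (η a)) * spin (π r (η b))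
        + ∑ a, h a * ∑ r, spin (π r (η a)) := by
    simp only [hquad, hlin]
    congr 1
    · exact sum_congr rfl fun a _ => sum_congr rfl fun b _ => by ring
    · exact sum_congr rfl fun a _ => by ring
  rw [hrhs]
  simp only [mul_sum]
  congr 1
  · rw [sum_comm]
    refine sum_congr rfl fun a _ => ?_
    rw [sum_comm]
    exact sum_congr rfl fun b _ => sum_congr rfl fun r _ => by ring
  · exact sum_comm

theorem sum_mul_prod_isingWeight_nonneg (hJ : ∀ a b, 0 ≤ J a b) (hh : ∀ a, 0 ≤ h a)
    {S κ R : Type*} [Fintype S] [Fintype κ] [Fintype R] (π : R → S → Bool) (V : κ → S → ℝ)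
    (hV : ∀ e : κ → ℕ, 0 ≤ ∑ s, ∏ v, V v s ^ e v) {c d : ℝ} (hc : 0 ≤ c) (hd : 0 ≤ d) (v₀ : κ)
    (hquad : ∀ s s', ∑ r, spin (π r s) * spin (π r s') = c * ∑ v, V v s * V v s')
    (hlin : ∀ s, ∑ r, spin (π r s) = d * V v₀ s)
    {g : (Fin n → S) → ℝ} (hg : g ∈ siteMonomialCone V) :
    0 ≤ ∑ η, g η * ∏ r, isingWeight n J h (fun a => π r (η a)) := by
  set m : Fin n → κ → (Fin n → S) → ℝ := fun a v η => V v (η a)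
  have hH : (∑ a, ∑ b, (c / 2 * J a b) • ∑ v, m a v * m b v + ∑ a, (d * h a) • m a v₀)
      ∈ siteMonomialCone V := by
    refine add_mem (sum_mem fun a _ => sum_mem fun b _ => ?_) (sum_mem fun a _ => ?_)
    · refine PointedCone.smul_mem _ (by have := hJ a b; positivity) (sum_mem fun v _ => ?_)
      exact mul_mem_hull (siteObservable_mem_siteMonomialCone V a v)
        (siteObservable_mem_siteMonomialCone V b v)
    · exact PointedCone.smul_mem _ (by have := hh a; positivity)
        (siteObservable_mem_siteMonomialCone V a v₀)
  simp only [prod_isingWeight_eq_exp π V c d v₀ hquad hlin]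
  simpa [m, Finset.sum_apply, smul_eq_mul, mul_assoc] using
    sum_mul_exp_nonneg (fun _ => sum_nonneg_of_mem_siteMonomials hV) hg hH

theorem weightedMean_twoReplicas_nonneg (hJ : ∀ a b, 0 ≤ J a b) (hh : ∀ a, 0 ≤ h a)
    {g : (Fin n → Bool × Bool) → ℝ} (hg : g ∈ siteMonomialCone rotatedPairSpins) :
    0 ≤ weightedMean (replicaProd (isingWeight n J h) (isingWeight n J h)) g := by
  refine weightedMean_nonneg (fun η => by unfold replicaProd isingWeight; positivity) ?_
  have := sum_mul_prod_isingWeight_nonneg hJ hh pairReplica rotatedPairSpins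
    rotatedPairSpins_moment_nonneg zero_le_two zero_le_two 0 sum_spin_pairReplica_mul
    sum_spin_pairReplica hg
  simpa [Fin.prod_univ_two, replicaProd, pairReplica] using this

theorem weightedMean_fourReplicas_nonneg (hJ : ∀ a b, 0 ≤ J a b) (hh : ∀ a, 0 ≤ h a)
    {g : (Fin n → (Bool × Bool) × (Bool × Bool)) → ℝ}
    (hg : g ∈ siteMonomialCone rotatedQuadrupleSpins) :
    0 ≤ weightedMean (replicaProd (replicaProd (isingWeight n J h) (isingWeight n J h))
      (replicaProd (isingWeight n J h) (isingWeight n J h))) g := by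
  refine weightedMean_nonneg (fun η => by unfold replicaProd isingWeight; positivity) ?_
  have := sum_mul_prod_isingWeight_nonneg hJ hh quadrupleReplica rotatedQuadrupleSpins
    rotatedQuadrupleSpins_moment_nonneg zero_le_one zero_le_two 0
    (fun s s' => by rw [sum_spin_quadrupleReplica_mul, one_mul]) sum_spin_quadrupleReplica hg
  simpa [Fin.prod_univ_four, replicaProd, quadrupleReplica, mul_assoc] using this

end IsingReplicas

section Spins

variable {ι : Type*}

def siteSpin (a : ι) : (ι → Bool) → ℝ := fun x => spin (x a)

lemma replicaCov_siteSpin_mem_siteMonomialCone (i j : ι) :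
    replicaCov (siteSpin i) (siteSpin j) ∈ siteMonomialCone rotatedPairSpins := by
  have q := siteObservable_mem_siteMonomialCone (ι := ι) rotatedPairSpins
  convert PointedCone.smul_mem _ zero_le_two (mul_mem_hull (add_mem (q i 0) (q i 1)) (q j 1))
    using 1
  ext η
  simp only [replicaCov, replicaProd, siteSpin, rotatedPairSpins, Pi.sub_apply, Pi.mul_apply,
    Pi.one_apply, Pi.smul_apply, Pi.add_apply, smul_eq_mul, Matrix.cons_val_zero,
    Matrix.cons_val_one]
  ring

lemma neg_replicaCov_replicaDiff_mem_siteMonomialCone (i j k : ι) :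
    -replicaCov (replicaDiff (siteSpin i) * replicaDiff (siteSpin j)) (replicaSum (siteSpin k))
      ∈ siteMonomialCone rotatedQuadrupleSpins := by
  have r := siteObservable_mem_siteMonomialCone (ι := ι) rotatedQuadrupleSpins
  convert PointedCone.smul_mem _ zero_le_two (mul_mem_hull (mul_mem_hull
    (add_mem (r i 1) (r i 3)) (add_mem (r j 1) (r j 3))) (r k 2)) using 1
  ext ζ
  simp only [replicaCov, replicaProd, replicaDiff, replicaSum, siteSpin, rotatedQuadrupleSpins,
    Pi.neg_apply, Pi.sub_apply, Pi.mul_apply, Pi.one_apply, Pi.smul_apply, Pi.add_apply,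
    smul_eq_mul, Matrix.cons_val_zero, Matrix.cons_val_one,
    Matrix.cons_val_two, Matrix.cons_val_three, Matrix.head_cons, Matrix.tail_cons]
  ring

end Spins

theorem cov_nonneg_and_third_derivative_nonpos_general (n : ℕ) (J : Fin n → Fin n → ℝ) (h : Fin n → ℝ)
    (hJ : ∀ a b, 0 ≤ J a b) (hh : ∀ a, 0 ≤ h a) (i j k : Fin n) :
    (isingE n J h (fun x => spin (x i) * spin (x j))
        - isingE n J h (fun x => spin (x i)) * isingE n J h (fun x => spin (x j)) ≥ 0) ∧
    (isingE n J h (fun x => spin (x i) * spin (x j) * spin (x k))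
        - isingE n J h (fun x => spin (x i) * spin (x k)) * isingE n J h (fun x => spin (x j))
        - isingE n J h (fun x => spin (x i)) * isingE n J h (fun x => spin (x j) * spin (x k))
        - isingE n J h (fun x => spin (x i) * spin (x j)) * isingE n J h (fun x => spin (x k))
        + 2 * isingE n J h (fun x => spin (x i)) * isingE n J h (fun x => spin (x j))
            * isingE n J h (fun x => spin (x k)) ≤ 0) := by
  have hW : ∑ x, isingWeight n J h x ≠ 0 :=
    (sum_pos (fun x _ => Real.exp_pos _) univ_nonempty).ne'
  constructor
  · have hcov :=
      weightedMean_twoReplicas_nonneg hJ hh (replicaCov_siteSpin_mem_siteMonomialCone i j)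
    exact hcov.trans_eq (weightedMean_mul_sub_mul hW _ _).symm
  · have hghs := weightedMean_fourReplicas_nonneg hJ hh
      (neg_replicaCov_replicaDiff_mem_siteMonomialCone i j k)
    rw [map_neg, ← weightedMean_mul_sub_mul (sum_replicaProd_self_ne_zero hW)] at hghs
    refine (weightedMean_thirdCumulant_eq hW (siteSpin i) (siteSpin j) (siteSpin k)).trans_le ?_
    linarith

/-- In a ferromagnetic Ising model with nonnegative external field:
(a) covariances are nonnegative, and (b) the GHS-type third-derivative inequality holds. -/
theorem cov_nonneg_and_third_derivative_nonpos (n : ℕ) (J : Fin n → Fin n → ℝ) (h : Fin n → ℝ)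
    (hsymm : ∀ a b, J a b = J b a) (hdiag : ∀ a, J a a = 0)
    (hJ : ∀ a b, 0 ≤ J a b) (hh : ∀ a, 0 ≤ h a) (i j k : Fin n) :
    (isingE n J h (fun x => spin (x i) * spin (x j))
        - isingE n J h (fun x => spin (x i)) * isingE n J h (fun x => spin (x j)) ≥ 0) ∧
    (isingE n J h (fun x => spin (x i) * spin (x j) * spin (x k))
        - isingE n J h (fun x => spin (x i) * spin (x k)) * isingE n J h (fun x => spin (x j))
        - isingE n J h (fun x => spin (x i)) * isingE n J h (fun x => spin (x j) * spin (x k))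
        - isingE n J h (fun x => spin (x i) * spin (x j)) * isingE n J h (fun x => spin (x k))
        + 2 * isingE n J h (fun x => spin (x i)) * isingE n J h (fun x => spin (x j))
            * isingE n J h (fun x => spin (x k)) ≤ 0) :=
  cov_nonneg_and_third_derivative_nonpos_general n J h hJ hh i j k
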